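/- arXiv:1701.04738 — 4 statements merged into one kernel-verified Lean document; each statement's English description precedes it below -/
import Mathlib

section
/- Let S be a finite subset of ℕ² and let m ≥ 1 be an integer. The only polynomial supported on S that vanishes to order ≥ m at (1,1) is the zero polynomial, if and only if for every point (i,j) ∈ S there exists a polynomial f ∈ ℚ[x,y] of total degree ≤ m−1 such that f(i,j) ≠ 0 and f(i',j') = 0 for all (i',j') ∈ S with (i',j') ≠ (i,j). -/
/-- The polynomial `∑_{(i,j) ∈ S} a_{ij} x^i y^j` supported on the finite set
`S ⊆ ℕ²`, with coefficients `a`. -/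
noncomputable def polyOf (S : Finset (ℕ × ℕ)) (a : ℕ × ℕ → ℚ) : MvPolynomial (Fin 2) ℚ :=
  ∑ p ∈ S, MvPolynomial.C (a p) * MvPolynomial.X 0 ^ p.1 * MvPolynomial.X 1 ^ p.2

/-- `f` vanishes to order `≥ m` at the point `(1,1)`:
`(∂ₓᵘ ∂ᵧᵛ f)(1,1) = 0` for all `u + v ≤ m - 1`. -/
def vanishesToOrder (m : ℕ) (f : MvPolynomial (Fin 2) ℚ) : Prop :=
  ∀ u v : ℕ, u + v ≤ m - 1 →
    MvPolynomial.eval (fun _ => (1 : ℚ))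
      ((fun g => MvPolynomial.pderiv (0 : Fin 2) g)^[u]
        ((fun g => MvPolynomial.pderiv (1 : Fin 2) g)^[v] f)) = 0

/-!
The Taylor coefficients at `(1,1)` of `∑ₚ aₚ xᵖ¹ yᵖ²` are the moments `∑ₚ aₚ (p₁)ᵤ (p₂)ᵥ` of the
falling factorials. As `(t)₀, …, (t)ₖ` span the same space as `1, t, …, tᵏ`, vanishing to order
`m` says exactly that the functional `f ↦ ∑ₚ aₚ f(p)` kills every polynomial of total degree
`< m`. So only the zero polynomial vanishes iff no nonzero weighting of `S` annihilates these
polynomials, i.e. iff evaluation at the points of `S` maps them onto `ℚ^S`, which is the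
existence of separating polynomials.
-/

section

variable {R : Type*}

open Submodule Set

theorem LinearMap.apply_apply_eq_zero_of_mem_span [CommSemiring R] {M N P : Type*}
    [AddCommMonoid M] [AddCommMonoid N] [AddCommMonoid P] [Module R M] [Module R N] [Module R P]
    (B : M →ₗ[R] N →ₗ[R] P) {s : Set M} {t : Set N} (h : ∀ x ∈ s, ∀ y ∈ t, B x y = 0)
    {x : M} {y : N} (hx : x ∈ span R s) (hy : y ∈ span R t) : B x y = 0 := by
  have ht : ∀ x ∈ s, span R t ≤ LinearMap.ker (B x) := fun x hx =>
    span_le.2 fun y hy => h x hx y hy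
  exact (span_le.2 fun x hx => ht x hx hy : span R s ≤ LinearMap.ker (B.flip y)) hx

theorem LinearMap.forall_add_le_apply_eq_zero_of_mem_span [CommSemiring R] {M P : Type*}
    [AddCommMonoid M] [AddCommMonoid P] [Module R M] [Module R P] (B : M →ₗ[R] M →ₗ[R] P)
    {f g : ℕ → M} (hfg : ∀ u, f u ∈ span R (g '' Iic u)) {n : ℕ}
    (hg : ∀ u v, u + v ≤ n → B (g u) (g v) = 0) :
    ∀ u v, u + v ≤ n → B (f u) (f v) = 0 :=
  fun u v huv => B.apply_apply_eq_zero_of_mem_span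
    (by rintro _ ⟨k, hk, rfl⟩ _ ⟨l, hl, rfl⟩; exact hg k l ((add_le_add hk hl).trans huv))
    (hfg u) (hfg v)

open Polynomial

variable [CommRing R]

theorem Polynomial.X_pow_mem_span_descPochhammer (u : ℕ) :
    (X ^ u : R[X]) ∈ span R (descPochhammer R '' Iic u) := by
  induction u with
  | zero => exact subset_span ⟨0, mem_Iic.2 le_rfl, by simp⟩
  | succ u ih =>
    have hX : span R (descPochhammer R '' Iic u) ≤
        (span R (descPochhammer R '' Iic (u + 1))).comap (LinearMap.mulRight R X) := by
      rw [span_le]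
      rintro _ ⟨k, hk, rfl⟩
      have : descPochhammer R k * X = descPochhammer R (k + 1) + k • descPochhammer R k := by
        rw [descPochhammer_succ_right, nsmul_eq_mul]; ring
      rw [SetLike.mem_coe, mem_comap, LinearMap.mulRight_apply, this]
      exact add_mem (subset_span ⟨k + 1, by simpa using hk, rfl⟩)
        (nsmul_mem (subset_span (mem_image_of_mem _ (Iic_subset_Iic.2 u.le_succ hk))) k)
    simpa [pow_succ] using hX ih

theorem Polynomial.descPochhammer_mem_span_X_pow (u : ℕ) :
    descPochhammer R u ∈ span R ((X ^ · : ℕ → R[X]) '' Iic u) := by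
  induction u with
  | zero => exact subset_span ⟨0, mem_Iic.2 le_rfl, by simp⟩
  | succ u ih =>
    have hX : span R ((X ^ · : ℕ → R[X]) '' Iic u) ≤
        (span R ((X ^ · : ℕ → R[X]) '' Iic (u + 1))).comap (LinearMap.mulRight R X) := by
      rw [span_le]
      rintro _ ⟨k, hk, rfl⟩
      exact subset_span ⟨k + 1, by simpa using hk, pow_succ X k⟩
    have hmono : span R ((X ^ · : ℕ → R[X]) '' Iic u) ≤
        span R ((X ^ · : ℕ → R[X]) '' Iic (u + 1)) :=
      span_mono (image_mono (Iic_subset_Iic.2 u.le_succ))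
    rw [descPochhammer_succ_right, mul_sub, mul_comm _ (u : R[X]), ← nsmul_eq_mul]
    exact sub_mem (hX ih) (nsmul_mem (hmono ih) u)

theorem forall_descPochhammer_iff_forall_X_pow {M : Type*} [AddCommMonoid M] [Module R M]
    (B : R[X] →ₗ[R] R[X] →ₗ[R] M) (n : ℕ) :
    (∀ u v, u + v ≤ n → B (descPochhammer R u) (descPochhammer R v) = 0) ↔
      ∀ u v, u + v ≤ n → B (X ^ u) (X ^ v) = 0 :=
  ⟨B.forall_add_le_apply_eq_zero_of_mem_span X_pow_mem_span_descPochhammer,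
    B.forall_add_le_apply_eq_zero_of_mem_span descPochhammer_mem_span_X_pow⟩

end

theorem forall_sum_mul_eq_zero_iff_exists_separating {K V α : Type*} [Field K] [AddCommGroup V]
    [Module K V] (S : Finset α) (W : Submodule K V) (e : α → V →ₗ[K] K) :
    (∀ a : α → K, (∀ v ∈ W, ∑ p ∈ S, a p * e p v = 0) → ∀ p ∈ S, a p = 0) ↔
      ∀ p ∈ S, ∃ v ∈ W, e p v ≠ 0 ∧ ∀ q ∈ S, q ≠ p → e q v = 0 := by
  classical
  constructor
  · intro h p hp
    let E : V →ₗ[K] S → K := LinearMap.pi fun q => e q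
    suffices Pi.single ⟨p, hp⟩ 1 ∈ W.map E by
      obtain ⟨v, hv, hEv⟩ := this
      refine ⟨v, hv, ?_, fun q hq hqp => ?_⟩
      · have : e p v = 1 := by simpa [E] using congrFun hEv ⟨p, hp⟩
        simp [this]
      · simpa [E, hqp] using congrFun hEv ⟨q, hq⟩
    -- a functional on `K^S` killing `E(W)` but not `δₚ` would be a forbidden weighting
    by_contra hnot
    obtain ⟨φ, hφ, hφW⟩ := Submodule.exists_dual_map_eq_bot_of_notMem hnot inferInstance
    refine hφ ?_
    have := h (fun q => if hq : q ∈ S then φ (Pi.single ⟨q, hq⟩ 1) else 0)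
      (fun v hv => ?_) p hp
    · simpa [hp] using this
    have hφE : φ (E v) = 0 := by
      have := Submodule.mem_map_of_mem (f := φ) (Submodule.mem_map_of_mem (f := E) hv)
      rwa [hφW, Submodule.mem_bot] at this
    rw [← hφE, φ.pi_apply_eq_sum_univ, ← Finset.sum_coe_sort S]
    refine Finset.sum_congr rfl fun q _ => ?_
    have hsingle : (fun j => if q = j then (1 : K) else 0) = Pi.single q 1 := by
      ext j; simp [Pi.single_apply, eq_comm]
    simp [E, hsingle, mul_comm]
  · intro h a ha p hp
    obtain ⟨v, hv, hpv, hqv⟩ := h p hp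
    have := ha v hv
    rw [Finset.sum_eq_single_of_mem p hp fun q hq hqp => by rw [hqv q hq hqp, mul_zero]] at this
    exact (mul_eq_zero.1 this).resolve_right hpv

open MvPolynomial

theorem MvPolynomial.iterate_pderiv_monomial {R σ : Type*} [CommSemiring R] (i : σ) (k : ℕ)
    (s : σ →₀ ℕ) (c : R) :
    (pderiv i)^[k] (monomial s c) =
      monomial (s - Finsupp.single i k) (c * (s i).descFactorial k) := by
  classical
  induction k with
  | zero => simp
  | succ k ih =>
    rw [Function.iterate_succ_apply', ih, pderiv_monomial, tsub_tsub, ← Finsupp.single_add,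
      Nat.descFactorial_succ]
    simp only [Finsupp.coe_tsub, Pi.sub_apply, Finsupp.single_eq_same, Nat.cast_mul]
    ring_nf

theorem MvPolynomial.iterate_pderiv_sum {R σ ι : Type*} [CommSemiring R] (i : σ) (k : ℕ)
    (s : Finset ι) (f : ι → MvPolynomial σ R) :
    (pderiv i)^[k] (∑ j ∈ s, f j) = ∑ j ∈ s, (pderiv i)^[k] (f j) := by
  rw [← Derivation.coeFn_coe, ← Module.End.coe_pow, map_sum]

theorem MvPolynomial.monomial_one_eq_X_pow_mul_X_pow {R : Type*} [CommSemiring R]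
    (d : Fin 2 →₀ ℕ) :
    monomial d (1 : R) = X 0 ^ d 0 * X 1 ^ d 1 := by
  rw [monomial_eq, C_1, one_mul, Finsupp.prod_fintype _ _ fun _ => pow_zero _, Fin.prod_univ_two]

noncomputable abbrev expVec (p : ℕ × ℕ) : Fin 2 →₀ ℕ :=
  Finsupp.single 0 p.1 + Finsupp.single 1 p.2

theorem expVec_injective : Function.Injective expVec := fun _ _ h =>
  Prod.ext (by simpa using DFunLike.congr_fun h 0) (by simpa using DFunLike.congr_fun h 1)

theorem MvPolynomial.restrictTotalDegree_le_ker_iff {R M : Type*} [CommSemiring R]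
    [AddCommMonoid M] [Module R M] (ℓ : MvPolynomial (Fin 2) R →ₗ[R] M) (n : ℕ) :
    restrictTotalDegree (Fin 2) R n ≤ LinearMap.ker ℓ ↔
      ∀ u v, u + v ≤ n → ℓ (X 0 ^ u * X 1 ^ v) = 0 := by
  rw [restrictTotalDegree, restrictSupport_eq_span, Submodule.span_le, Set.image_subset_iff]
  constructor
  · intro h u v huv
    have hd : expVec (u, v) ∈ {d : Fin 2 →₀ ℕ | (d.sum fun _ e => e) ≤ n} := by
      simpa [Finsupp.sum_add_index'] using huv
    simpa [monomial_one_eq_X_pow_mul_X_pow] using h hd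
  · intro h d hd
    have hd' : d 0 + d 1 ≤ n := by simpa [Finsupp.sum_fintype, Fin.sum_univ_two] using hd
    simpa [monomial_one_eq_X_pow_mul_X_pow] using h _ _ hd'

theorem polyOf_eq_sum_monomial (S : Finset (ℕ × ℕ)) (a : ℕ × ℕ → ℚ) :
    polyOf S a = ∑ p ∈ S, monomial (expVec p) (a p) := by
  refine Finset.sum_congr rfl fun p _ => ?_
  rw [X_pow_eq_monomial, X_pow_eq_monomial, C_mul_monomial, monomial_mul]
  simp

theorem coeff_polyOf (S : Finset (ℕ × ℕ)) (a : ℕ × ℕ → ℚ) (p : ℕ × ℕ) :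
    coeff (expVec p) (polyOf S a) = if p ∈ S then a p else 0 := by
  simp only [polyOf_eq_sum_monomial, coeff_sum, coeff_monomial, expVec_injective.eq_iff]
  rw [Finset.sum_ite_eq']

theorem polyOf_eq_zero_iff (S : Finset (ℕ × ℕ)) (a : ℕ × ℕ → ℚ) :
    polyOf S a = 0 ↔ ∀ p ∈ S, a p = 0 := by
  refine ⟨fun h p hp => ?_, fun h => ?_⟩
  · simpa [hp, h, eq_comm] using coeff_polyOf S a p
  · rw [polyOf_eq_sum_monomial]
    exact Finset.sum_eq_zero fun p hp => by rw [h p hp, monomial_zero]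

theorem eval_one_iterate_pderiv_polyOf (S : Finset (ℕ × ℕ)) (a : ℕ × ℕ → ℚ) (u v : ℕ) :
    eval 1 ((pderiv 0)^[u] ((pderiv 1)^[v] (polyOf S a))) =
      ∑ p ∈ S, a p * p.1.descFactorial u * p.2.descFactorial v := by
  simp only [polyOf_eq_sum_monomial, iterate_pderiv_sum, iterate_pderiv_monomial, map_sum,
    eval_monomial]
  refine Finset.sum_congr rfl fun p _ => ?_
  simp [mul_comm, mul_assoc, mul_left_comm]

theorem vanishesToOrder_polyOf_iff (S : Finset (ℕ × ℕ)) (a : ℕ × ℕ → ℚ) (m : ℕ) :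
    vanishesToOrder m (polyOf S a) ↔ ∀ u v, u + v ≤ m - 1 →
      ∑ p ∈ S, a p * p.1.descFactorial u * p.2.descFactorial v = 0 := by
  simp only [vanishesToOrder, ← eval_one_iterate_pderiv_polyOf]
  rfl

theorem vanishesToOrder_polyOf_iff_forall_totalDegree_le (S : Finset (ℕ × ℕ)) (a : ℕ × ℕ → ℚ)
    (m : ℕ) :
    vanishesToOrder m (polyOf S a) ↔ ∀ f : MvPolynomial (Fin 2) ℚ, f.totalDegree ≤ m - 1 →
      ∑ p ∈ S, a p * eval ![(p.1 : ℚ), (p.2 : ℚ)] f = 0 := by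
  let ℓ : MvPolynomial (Fin 2) ℚ →ₗ[ℚ] ℚ :=
    ∑ p ∈ S, a p • (aeval ![(p.1 : ℚ), (p.2 : ℚ)]).toLinearMap
  let B : Polynomial ℚ →ₗ[ℚ] Polynomial ℚ →ₗ[ℚ] ℚ :=
    ((LinearMap.mul ℚ _).compl₁₂ (Polynomial.aeval (X 0 : MvPolynomial (Fin 2) ℚ)).toLinearMap
      (Polynomial.aeval (X 1 : MvPolynomial (Fin 2) ℚ)).toLinearMap).compr₂ ℓ
  have hℓ (f) : ℓ f = ∑ p ∈ S, a p * aeval ![(p.1 : ℚ), (p.2 : ℚ)] f := by simp [ℓ]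
  have hB (g h : Polynomial ℚ) :
      B g h = ∑ p ∈ S, a p * (g.eval (p.1 : ℚ) * h.eval (p.2 : ℚ)) := by
    simp only [B, LinearMap.compr₂_apply, LinearMap.compl₁₂_apply, AlgHom.toLinearMap_apply,
      LinearMap.mul_apply', hℓ, map_mul, ← Polynomial.aeval_algHom_apply, aeval_X,
      Polynomial.coe_aeval_eq_eval]
    simp
  calc vanishesToOrder m (polyOf S a)
      ↔ ∀ u v, u + v ≤ m - 1 → B (descPochhammer ℚ u) (descPochhammer ℚ v) = 0 := by
        simp [vanishesToOrder_polyOf_iff, hB, descPochhammer_eval_eq_descFactorial, mul_assoc]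
    _ ↔ ∀ u v, u + v ≤ m - 1 → B (.X ^ u) (.X ^ v) = 0 :=
        forall_descPochhammer_iff_forall_X_pow B _
    _ ↔ restrictTotalDegree (Fin 2) ℚ (m - 1) ≤ LinearMap.ker ℓ := by
        simp [restrictTotalDegree_le_ker_iff, B]
    _ ↔ _ := by simp [SetLike.le_def, mem_restrictTotalDegree, hℓ, aeval_eq_eval]

theorem only_zero_vanishes_iff_interpolation_general (S : Finset (ℕ × ℕ)) (m : ℕ) :
    (∀ a : ℕ × ℕ → ℚ, vanishesToOrder m (polyOf S a) → polyOf S a = 0) ↔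
      ∀ p ∈ S, ∃ f : MvPolynomial (Fin 2) ℚ, f.totalDegree ≤ m - 1 ∧
        MvPolynomial.eval ![(p.1 : ℚ), (p.2 : ℚ)] f ≠ 0 ∧
        ∀ q ∈ S, q ≠ p → MvPolynomial.eval ![(q.1 : ℚ), (q.2 : ℚ)] f = 0 := by
  have := forall_sum_mul_eq_zero_iff_exists_separating S
    (restrictTotalDegree (Fin 2) ℚ (m - 1)) fun p => (aeval ![(p.1 : ℚ), (p.2 : ℚ)]).toLinearMap
  simp only [mem_restrictTotalDegree, AlgHom.toLinearMap_apply, aeval_eq_eval] at this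
  simpa only [vanishesToOrder_polyOf_iff_forall_totalDegree_le, polyOf_eq_zero_iff] using this

/-- the only polynomial supported on `S` vanishing to order `≥ m`
at `(1,1)` is the zero polynomial, iff every point of `S` can be separated from
the remaining points of `S` by a polynomial of total degree at most `m - 1`. -/
theorem only_zero_vanishes_iff_interpolation (S : Finset (ℕ × ℕ)) (m : ℕ) (hm : 1 ≤ m) :
    (∀ a : ℕ × ℕ → ℚ, vanishesToOrder m (polyOf S a) → polyOf S a = 0) ↔
      ∀ p ∈ S, ∃ f : MvPolynomial (Fin 2) ℚ, f.totalDegree ≤ m - 1 ∧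
        MvPolynomial.eval ![(p.1 : ℚ), (p.2 : ℚ)] f ≠ 0 ∧
        ∀ q ∈ S, q ≠ p → MvPolynomial.eval ![(q.1 : ℚ), (q.2 : ℚ)] f = 0 :=
  only_zero_vanishes_iff_interpolation_general S m
end

section
/- The ℚ-vector space V = { f ∈ ℚ[x,y] : f has total degree ≤ n, f(q) = 0 for all q ∈ Q, and f(P_k) = 0 for all 0 ≤ k ≤ n−1 } has dimension exactly 1. (Equivalently, there is a curve of degree ≤ n passing through the n(n+1)/2 points of Q and the n points P_0,…,P_{n−1}, and it is unique up to scaling.) -/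
/-!
A polynomial of total degree `≤ d` vanishing on a triangular grid `(u a, v a b)`, `a + b ≤ d`
(distinct columns `x = u a`, the `a`-th one carrying `d + 1 - a` distinct points) is zero: its
restriction to the first column has `d + 1` zeros, so `x - u 0` divides it, and the quotient
vanishes on the remaining grid of size `d - 1`. The column `x = 0` with the points `(0, β + k)`,
`k ≤ n`, together with `Q` form such a grid of size `n`, so an element of `V` is determined by its
value at `(0, β + n)`. Conversely, the products `(x - α)_m (y)_{n-m}` of falling factorials vanish
on `Q`, and by the Chu–Vandermonde identity a combination of them restricts on the `y`-axis to
`(y - β)_n`, which vanishes at `β, …, β + n - 1` but not at `β + n`.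
-/

open Finset Function

namespace MvPolynomial

variable {R : Type*} [CommRing R]

lemma eval_eval_C_finSuccEquiv {n : ℕ} (f : MvPolynomial (Fin (n + 1)) R) (c : R)
    (s : Fin n → R) : eval s ((finSuccEquiv R n f).eval (C c)) = eval (Fin.cons c s) f := by
  rw [eval_eq_eval_mv_eval', Polynomial.eval_map, ← Polynomial.eval₂_hom, eval_C]

lemma totalDegree_eval_C_finSuccEquiv_le {n : ℕ} (f : MvPolynomial (Fin (n + 1)) R) (c : R) :
    ((finSuccEquiv R n f).eval (C c)).totalDegree ≤ f.totalDegree := by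
  rw [Polynomial.eval_eq_sum_range]
  refine totalDegree_finsetSum_le fun j _ => ?_
  rcases eq_or_ne ((finSuccEquiv R n f).coeff j) 0 with h | h
  · simp [h]
  · calc _ ≤ _ := totalDegree_mul _ _
      _ = ((finSuccEquiv R n f).coeff j).totalDegree := by rw [← C_pow, totalDegree_C, add_zero]
      _ ≤ _ := (Nat.le_add_right _ _).trans (totalDegree_coeff_finSuccEquiv_add_le f j h)

lemma X_zero_sub_C_dvd_iff_isRoot_finSuccEquiv {n : ℕ} {f : MvPolynomial (Fin (n + 1)) R}
    {c : R} : X 0 - C c ∣ f ↔ (finSuccEquiv R n f).IsRoot (C c) := by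
  have : finSuccEquiv R n (X 0 - C c) = Polynomial.X - Polynomial.C (C c) := by
    simp [finSuccEquiv_apply]
  rw [← Polynomial.dvd_iff_isRoot, ← this, map_dvd_iff]

lemma totalDegree_X_sub_C [Nontrivial R] {σ : Type*} (i : σ) (c : R) :
    (X i - C c : MvPolynomial σ R).totalDegree = 1 := by
  rw [sub_eq_add_neg, ← C_neg, totalDegree_add_eq_left_of_totalDegree_lt] <;>
    simp [totalDegree_X]

lemma totalDegree_prod_X_sub_C_le [Nontrivial R] {σ ι : Type*} (i : σ) (s : Finset ι)
    (c : ι → R) : (∏ j ∈ s, (X i - C (c j))).totalDegree ≤ #s :=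
  (totalDegree_finsetProd _ _).trans (by simp [totalDegree_X_sub_C])

variable [IsDomain R]

theorem X_zero_sub_C_dvd_of_eval_zero {d : ℕ} {f : MvPolynomial (Fin 2) R}
    (hf : f.totalDegree ≤ d) {c : R} {v : ℕ → R} (hv : Injective v)
    (h : ∀ b ≤ d, eval ![c, v b] f = 0) : X 0 - C c ∣ f := by
  classical
  rw [X_zero_sub_C_dvd_iff_isRoot_finSuccEquiv]
  apply eq_zero_of_eval_zero_at_prod_finset _ fun _ => (range (d + 1)).image v
  · intro i
    rw [card_image_of_injective _ hv, card_range, Nat.lt_succ_iff]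
    exact (degreeOf_le_totalDegree _ i).trans ((totalDegree_eval_C_finSuccEquiv_le f c).trans hf)
  · intro x hx
    obtain ⟨b, hb, hxb⟩ := mem_image.1 (hx 0)
    have hxv : x = ![v b] := by ext i; fin_cases i; exact hxb.symm
    rw [hxv, eval_eval_C_finSuccEquiv]
    exact h b (Nat.lt_succ_iff.1 (mem_range.1 hb))

theorem eq_zero_of_eval_zero_at_triangle {d : ℕ} {f : MvPolynomial (Fin 2) R}
    (hf : f.totalDegree ≤ d) {u : ℕ → R} (hu : Injective u) {v : ℕ → ℕ → R}
    (hv : ∀ a, Injective (v a)) (h : ∀ a b, a + b ≤ d → eval ![u a, v a b] f = 0) :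
    f = 0 := by
  induction d generalizing f u v with
  | zero =>
    rw [totalDegree_eq_zero_iff_eq_C.1 (Nat.le_zero.1 hf)] at h ⊢
    simpa using h 0 0 le_rfl
  | succ d ih =>
    obtain ⟨g, rfl⟩ := X_zero_sub_C_dvd_of_eval_zero hf (hv 0) fun b hb => h 0 b (by omega)
    rcases eq_or_ne g 0 with rfl | hg
    · exact mul_zero _
    have hX : (X 0 - C (u 0) : MvPolynomial (Fin 2) R) ≠ 0 := fun h0 => by
      simpa [h0] using totalDegree_X_sub_C (0 : Fin 2) (u 0)
    rw [totalDegree_mul_of_isDomain hX hg, totalDegree_X_sub_C] at hf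
    refine absurd (ih (by omega) (hu.comp Nat.succ_injective) (fun a => hv (a + 1))
      fun a b hab => ?_) hg
    have hu0 : u (a + 1) - u 0 ≠ 0 := sub_ne_zero.2 (hu.ne a.succ_ne_zero)
    simpa [hu0] using h (a + 1) b (by omega)

end MvPolynomial

theorem descPochhammer_eval_add {R : Type*} [CommRing R] (r s : R) (n : ℕ) :
    (descPochhammer R n).eval (r + s) = ∑ m ∈ range (n + 1),
      n.choose m * ((descPochhammer R m).eval r * (descPochhammer R (n - m)).eval s) := by
  have hsmeval (k : ℕ) (x : R) :
      (descPochhammer ℤ k).smeval x = (descPochhammer R k).eval x := by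
    rw [← Polynomial.aeval_eq_smeval, Polynomial.aeval_def, Polynomial.eval₂_eq_eval_map,
      descPochhammer_map]
  simp_rw [← hsmeval, Ring.descPochhammer_smeval_add n (Commute.all r s),
    Nat.sum_antidiagonal_eq_sum_range_succ_mk]

open MvPolynomial

section Interpolation

variable {K : Type*} [Field K]

variable (K) in
def interpolationSpace (n α β : ℕ) : Submodule K (MvPolynomial (Fin 2) K) where
  carrier := {f | f.totalDegree ≤ n ∧
    (∀ a b : ℕ, a + b ≤ n - 1 → eval ![(α : K) + a, (b : K)] f = 0) ∧
    ∀ k : ℕ, k ≤ n - 1 → eval ![(0 : K), (β : K) + k] f = 0}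
  add_mem' := by
    rintro f g ⟨hf, hfQ, hfP⟩ ⟨hg, hgQ, hgP⟩
    exact ⟨(totalDegree_add f g).trans (max_le hf hg),
      fun a b h => by simp [hfQ a b h, hgQ a b h], fun k h => by simp [hfP k h, hgP k h]⟩
  zero_mem' := by simp
  smul_mem' := by
    rintro c f ⟨hf, hfQ, hfP⟩
    exact ⟨(totalDegree_smul_le c f).trans hf, fun a b h => by simp [hfQ a b h],
      fun k h => by simp [hfP k h]⟩

theorem eq_zero_of_mem_interpolationSpace_of_eval_eq_zero [CharZero K] {n α β : ℕ}
    (hα : 1 ≤ α) {f : MvPolynomial (Fin 2) K} (hf : f ∈ interpolationSpace K n α β)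
    (h : eval ![(0 : K), (β : K) + n] f = 0) : f = 0 := by
  obtain ⟨hdeg, hQ, hP⟩ := hf
  refine eq_zero_of_eval_zero_at_triangle hdeg
    (u := fun | 0 => 0 | a + 1 => (α : K) + a) ?_
    (v := fun | 0 => fun b => (β : K) + b | _ + 1 => fun b => b) ?_ ?_
  · rintro (_ | a) (_ | a') hu <;> simp only at hu <;> norm_cast at hu <;> omega
  · rintro (_ | a) <;> simp [Injective]
  · rintro (_ | a) b hab
    · rcases (by omega : b ≤ n - 1 ∨ b = n) with hb | rfl
      exacts [hP b hb, h]
    · exact hQ a b (by omega)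

lemma descPochhammer_eval_neg_natCast_ne_zero [CharZero K] {α : ℕ} (hα : 1 ≤ α) (m : ℕ) :
    (descPochhammer K m).eval (-(α : K)) ≠ 0 := by
  rw [descPochhammer_eval_eq_prod_range, prod_ne_zero_iff]
  intro j _
  rw [← neg_add', neg_ne_zero]
  exact_mod_cast (by omega : α + j ≠ 0)

variable (K) in
noncomputable def lineProduct (n α m : ℕ) : MvPolynomial (Fin 2) K :=
  (∏ i ∈ range m, (X 0 - C ((α : K) + i))) * ∏ j ∈ range (n - m), (X 1 - C (j : K))

lemma eval_lineProduct (n α m : ℕ) (p : Fin 2 → K) :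
    eval p (lineProduct K n α m) =
      (descPochhammer K m).eval (p 0 - α) * (descPochhammer K (n - m)).eval (p 1) := by
  simp [lineProduct, descPochhammer_eval_eq_prod_range, sub_sub]

lemma totalDegree_lineProduct_le {n m : ℕ} (hm : m ≤ n) (α : ℕ) :
    (lineProduct K n α m).totalDegree ≤ n := by
  refine (totalDegree_mul _ _).trans ?_
  grw [totalDegree_prod_X_sub_C_le, totalDegree_prod_X_sub_C_le]
  simp only [card_range]
  omega

lemma eval_lineProduct_of_add_lt {n a b : ℕ} (hab : a + b < n) (α m : ℕ) :
    eval ![(α : K) + a, (b : K)] (lineProduct K n α m) = 0 := by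
  rw [eval_lineProduct]
  simp only [Matrix.cons_val_zero, Matrix.cons_val_one, add_sub_cancel_left]
  rcases lt_or_ge a m with h | h
  · rw [descPochhammer_eval_coe_nat_of_lt h, zero_mul]
  · rw [descPochhammer_eval_coe_nat_of_lt (by omega : b < n - m), mul_zero]

variable (K) in
noncomputable def interpolant (n α β : ℕ) : MvPolynomial (Fin 2) K :=
  ∑ m ∈ range (n + 1), C (n.choose m * (descPochhammer K m).eval (-(β : K)) /
    (descPochhammer K m).eval (-(α : K))) * lineProduct K n α m

lemma eval_interpolant_on_yAxis [CharZero K] {α : ℕ} (hα : 1 ≤ α) (n β : ℕ) (y : K) :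
    eval ![0, y] (interpolant K n α β) = (descPochhammer K n).eval (y - β) := by
  rw [sub_eq_neg_add, descPochhammer_eval_add]
  simp only [interpolant, map_sum, map_mul, eval_C, eval_lineProduct, Matrix.cons_val_zero,
    Matrix.cons_val_one, zero_sub]
  refine sum_congr rfl fun m _ => ?_
  field_simp [descPochhammer_eval_neg_natCast_ne_zero hα m]

lemma interpolant_mem_interpolationSpace [CharZero K] {n α : ℕ} (hn : 1 ≤ n) (hα : 1 ≤ α)
    (β : ℕ) : interpolant K n α β ∈ interpolationSpace K n α β := by
  refine ⟨totalDegree_finsetSum_le fun m hm => ?_, fun a b hab => ?_, fun k hk => ?_⟩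
  · refine (totalDegree_mul _ _).trans ?_
    rw [totalDegree_C, zero_add]
    exact totalDegree_lineProduct_le (by simpa [Nat.lt_succ_iff] using hm) α
  · simp [interpolant, eval_lineProduct_of_add_lt (by omega : a + b < n)]
  · rw [eval_interpolant_on_yAxis hα, add_sub_cancel_left]
    exact descPochhammer_eval_coe_nat_of_lt (by omega)

lemma eval_interpolant_ne_zero [CharZero K] {α : ℕ} (hα : 1 ≤ α) (n β : ℕ) :
    eval ![0, (β : K) + n] (interpolant K n α β) ≠ 0 := by
  rw [eval_interpolant_on_yAxis hα, add_sub_cancel_left, descPochhammer_eval_eq_descFactorial,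
    Nat.descFactorial_self]
  exact_mod_cast n.factorial_ne_zero

end Interpolation

/-- the space of polynomials of total degree `≤ n` vanishing at all
points of `Q = {(α+i, j) : 0 ≤ i ≤ n-1, 0 ≤ j ≤ n-1-i}` and at the points
`P_k = (0, β+k)` for `0 ≤ k ≤ n-1` has dimension exactly `1`: there is a nonzero
such polynomial, unique up to scaling. -/
theorem interpolation_space_dim_one (n α β : ℕ) (hn : 1 ≤ n) (hα : 1 ≤ α) :
    ∃ f₀ : MvPolynomial (Fin 2) ℚ, f₀ ≠ 0 ∧
      (f₀.totalDegree ≤ n ∧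
        (∀ a b : ℕ, a + b ≤ n - 1 →
          MvPolynomial.eval ![(α : ℚ) + (a : ℚ), (b : ℚ)] f₀ = 0) ∧
        (∀ k : ℕ, k ≤ n - 1 →
          MvPolynomial.eval ![(0 : ℚ), (β : ℚ) + (k : ℚ)] f₀ = 0)) ∧
      ∀ f : MvPolynomial (Fin 2) ℚ, f.totalDegree ≤ n →
        (∀ a b : ℕ, a + b ≤ n - 1 →
          MvPolynomial.eval ![(α : ℚ) + (a : ℚ), (b : ℚ)] f = 0) →
        (∀ k : ℕ, k ≤ n - 1 →
          MvPolynomial.eval ![(0 : ℚ), (β : ℚ) + (k : ℚ)] f = 0) →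
        ∃ c : ℚ, f = c • f₀ := by
  set f₀ := interpolant ℚ n α β
  have hf₀ : f₀ ∈ interpolationSpace ℚ n α β :=
    interpolant_mem_interpolationSpace hn hα β
  have hφf₀ : eval ![0, (β : ℚ) + n] f₀ ≠ 0 := eval_interpolant_ne_zero hα n β
  refine ⟨f₀, fun h => hφf₀ (by rw [h, map_zero]), hf₀, fun f hdeg hQ hP => ?_⟩
  have hf : f ∈ interpolationSpace ℚ n α β := ⟨hdeg, hQ, hP⟩
  refine ⟨eval ![0, (β : ℚ) + n] f / eval ![0, (β : ℚ) + n] f₀, sub_eq_zero.1 ?_⟩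
  refine eq_zero_of_mem_interpolationSpace_of_eval_eq_zero hα
    (sub_mem hf (Submodule.smul_mem _ _ hf₀)) ?_
  rw [map_sub, smul_eval, div_mul_cancel₀ _ hφf₀, sub_self]
end

section
/- Let n ≥ 1, α ≥ 1, β ≥ 0 be integers. Let M' be the n×(n+1) matrix over ℚ with rows indexed by i ∈ {0,…,n−1} and columns indexed by j ∈ {0,…,n}, whose (i,j)-entry is C(−α, j)·C(β+i, n−j). Then M' has rank n (i.e., its rows are linearly independent over ℚ). -/
/-!
Restrict `M'` to its last `n` columns and reverse their order. The resulting square matrix has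
entries `C(-α, n - k) · C(β + i, k)`, i.e. it is the matrix `(descPochhammer k)(β + i)` with its
`k`-th column scaled by `C(-α, n - k) / k!`, which is nonzero because `-α < 0`. A matrix of
values of monic polynomials of degrees `0, …, n - 1` at the distinct points `β + i` has the
Vandermonde determinant, so the square matrix is invertible and already its rows are independent.
-/

/-- The generalized binomial coefficient `C(z,k) = z(z-1)⋯(z-k+1)/k!` over `ℚ`. -/
noncomputable def genChoose (z : ℚ) (k : ℕ) : ℚ :=
  (∏ l ∈ Finset.range k, (z - (l : ℚ))) / (Nat.factorial k : ℚ)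

open Polynomial Matrix Function

lemma genChoose_eq_descPochhammer_eval (x : ℚ) (k : ℕ) :
    genChoose x k = (descPochhammer ℚ k).eval x / k.factorial := by
  rw [genChoose, descPochhammer_eval_eq_prod_range]

lemma genChoose_ne_zero_of_neg {x : ℚ} (hx : x < 0) (k : ℕ) : genChoose x k ≠ 0 := by
  refine div_ne_zero (Finset.prod_ne_zero_iff.2 fun l _ => ?_) (by positivity)
  have hl : (0 : ℚ) ≤ l := l.cast_nonneg
  exact (by linarith : x - l < 0).ne

theorem det_descPochhammer_eval_ne_zero {R : Type*} [CommRing R] [IsDomain R] {n : ℕ}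
    {v : Fin n → R} (hv : Injective v) :
    (of fun i k : Fin n => (descPochhammer R k).eval (v i)).det ≠ 0 := by
  rw [← det_eval_matrixOfPolynomials_eq_det_vandermonde v _
    (fun k => descPochhammer_natDegree R k) (fun k => monic_descPochhammer R k)]
  exact det_vandermonde_ne_zero_iff.2 hv

theorem linearIndependent_descPochhammer_eval_mul {K : Type*} [Field K] {n : ℕ}
    {v : Fin n → K} (hv : Injective v) {c : Fin n → K} (hc : ∀ k, c k ≠ 0) :
    LinearIndependent K fun i k : Fin n => (descPochhammer K k).eval (v i) * c k := by
  have hA : (of fun i k : Fin n => (descPochhammer K k).eval (v i) * c k) =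
      of (fun i k : Fin n => (descPochhammer K k).eval (v i)) * diagonal c := by
    ext i k
    simp [mul_diagonal]
  have hdet : (of fun i k : Fin n => (descPochhammer K k).eval (v i) * c k).det ≠ 0 := by
    rw [hA, det_mul, det_diagonal]
    exact mul_ne_zero (det_descPochhammer_eval_ne_zero hv)
      (Finset.prod_ne_zero_iff.2 fun k _ => hc k)
  exact linearIndependent_rows_of_det_ne_zero hdet

theorem Mprime_rows_independent_general (n α β : ℕ) (hα : 1 ≤ α) :
    LinearIndependent ℚ
      (fun i : Fin n => fun j : Fin (n + 1) =>
        genChoose (-(α : ℚ)) (j : ℕ) * genChoose ((β : ℚ) + (i : ℕ)) (n - (j : ℕ))) := by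
  let lastColsReversed : Fin n → Fin (n + 1) := fun k => k.castSucc.rev
  refine LinearIndependent.of_comp (LinearMap.funLeft ℚ ℚ lastColsReversed) ?_
  have hv : Injective fun i : Fin n => (β : ℚ) + (i : ℕ) :=
    fun a b h => Fin.ext (by simpa using h)
  have hα' : -(α : ℚ) < 0 := neg_lt_zero.2 (Nat.cast_pos.2 hα)
  have hc (k : Fin n) : genChoose (-(α : ℚ)) (n - k) / (k : ℕ).factorial ≠ 0 :=
    div_ne_zero (genChoose_ne_zero_of_neg hα' _) (by positivity)
  convert linearIndependent_descPochhammer_eval_mul hv hc using 1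
  · funext i k
    have hk : n - (n - k) = k := by omega
    simp only [Function.comp_apply, LinearMap.funLeft_apply, lastColsReversed, Fin.val_rev,
      Fin.val_castSucc, Nat.add_sub_add_right, hk, genChoose_eq_descPochhammer_eval (β + i)]
    ring
  · rfl

/-- the `n × (n+1)` matrix over `ℚ` with `(i,j)`-entry
`C(-α, j)·C(β+i, n-j)` has linearly independent rows (i.e. rank `n`). -/
theorem Mprime_rows_independent (n α β : ℕ) (hn : 1 ≤ n) (hα : 1 ≤ α) :
    LinearIndependent ℚ
      (fun i : Fin n => fun j : Fin (n + 1) =>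
        genChoose (-(α : ℚ)) (j : ℕ) * genChoose ((β : ℚ) + (i : ℕ)) (n - (j : ℕ))) :=
  Mprime_rows_independent_general n α β hα
end

section
/- Let n ≥ 1, α ≥ 1, β ≥ 0 be integers. Let M be the (n+1)×(n+1) matrix over ℚ with rows indexed by i ∈ {0,…,n} and columns indexed by j ∈ {0,…,n}, whose entries are: M_{i,j} = C(−α, j)·C(β+i, n−j) for 0 ≤ i ≤ n−1, and M_{n,j} = C(−1−α, j)·C(β+n+1, n−j). Then det M = 0 if and only if n·β = (n+1)·α. -/
/-- The `(n+1) × (n+1)` matrix `M`: for `0 ≤ i ≤ n-1` the `(i,j)`-entry is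
`C(-α, j)·C(β+i, n-j)`, and the last row has entries `C(-1-α, j)·C(β+n+1, n-j)`. -/
noncomputable def matM (n α β : ℕ) : Matrix (Fin (n + 1)) (Fin (n + 1)) ℚ := fun i j =>
  if (i : ℕ) < n then
    genChoose (-(α : ℚ)) (j : ℕ) * genChoose ((β : ℚ) + (i : ℕ)) (n - (j : ℕ))
  else
    genChoose (-1 - (α : ℚ)) (j : ℕ) * genChoose ((β : ℚ) + (n : ℚ) + 1) (n - (j : ℕ))

/-!
Up to the column scaling `C(-α, j)` (the identity `α·C(-1-α, j) = (α+j)·C(-α, j)` moves it out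
of the last row) and the column reversal `j ↦ n - j`, `M` is the matrix whose rows
`i < n` are the coefficient vectors `C(β+i, k)` of `(1+x)^(β+i)` truncated at degree `n`, and whose
last row is `v k = (α+n-k)/α · C(β+n+1, k)`. Multiplying on the right by the unitriangular
Toeplitz matrix of `(1+x)^(-β)` turns, by Chu–Vandermonde, the rows `i < n` into the Pascal rows
`C(i, l)`, so the product is lower triangular and the determinant is its last diagonal entry
`∑ₖ v k · C(-β, n-k)`. Chu–Vandermonde once more evaluates this sum to `((n+1)α - nβ)/α`.
-/

open Finset Matrix

namespace Ring

variable {R : Type*} [CommRing R] [BinomialRing R]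

theorem choose_add_eq_sum_range (r s : R) (K : ℕ) :
    choose (r + s) K = ∑ k ∈ range (K + 1), choose r k * choose s (K - k) := by
  rw [add_choose_eq K (Commute.all r s), Finset.Nat.sum_antidiagonal_eq_sum_range_succ_mk]

theorem mul_choose_sub_one (r : R) (k : ℕ) : r * choose (r - 1) k = (r - k) * choose r k := by
  have absorb := choose_smul_choose r (Nat.le_add_left 1 k)
  have pascal := choose_smul_choose r (Nat.le_add_right k 1)
  rw [Nat.add_sub_cancel, Nat.cast_one, choose_one_right, Nat.choose_one_right] at absorb
  rw [Nat.add_sub_cancel_left, choose_one_right, Nat.choose_succ_self_right] at pascal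
  rw [← absorb, pascal, mul_comm]

theorem choose_neg_natCast_ne_zero [CharZero R] {a : ℕ} (ha : 1 ≤ a) (k : ℕ) :
    choose (-(a : R)) k ≠ 0 := by
  obtain ⟨b, rfl⟩ := Nat.exists_eq_add_of_le' ha
  rw [choose_neg, show ((b + 1 : ℕ) : R) + k - 1 = ((b + k : ℕ) : R) by push_cast; ring,
    choose_natCast, Units.smul_def]
  rcases Int.units_eq_one_or (k : ℤ).negOnePow with h | h <;>
    simp [h, (Nat.choose_pos (Nat.le_add_left k b)).ne']

theorem sum_add_sub_mul_choose_mul_choose_neg (a b : R) (n : ℕ) :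
    ∑ k ∈ range (n + 1), (a + (n - k : ℕ)) * choose (b + n + 1) k * choose (-b) (n - k)
      = (n + 1) * a - n * b := by
  have hterm : ∀ k ∈ range (n + 1),
      (a + (n - k : ℕ)) * choose (b + n + 1) k * choose (-b) (n - k)
        = b * (choose (b + n + 1) k * choose (-b - 1) (n - k))
          + (a - b) * (choose (b + n + 1) k * choose (-b) (n - k)) := by
    intro k _
    linear_combination choose (b + n + 1) k * mul_choose_sub_one (-b) (n - k)
  rw [sum_congr rfl hterm, sum_add_distrib, ← mul_sum, ← mul_sum, ← choose_add_eq_sum_range,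
    ← choose_add_eq_sum_range, show b + n + 1 + (-b - 1) = (n : R) by ring,
    show b + n + 1 + -b = ((n + 1 : ℕ) : R) by push_cast; ring, choose_natCast, choose_natCast,
    Nat.choose_self, Nat.choose_succ_self_right]
  push_cast
  ring

end Ring

theorem genChoose_eq_choose (z : ℚ) (k : ℕ) : genChoose z k = Ring.choose z k := by
  rw [Ring.choose_eq_smul, ← Polynomial.aeval_eq_smeval, Polynomial.aeval_def,
    ← Polynomial.eval_map, descPochhammer_map, descPochhammer_eval_eq_prod_range, genChoose,
    smul_eq_mul, inv_mul_eq_div]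

section upperToeplitz

variable {R : Type*} [CommRing R] {n : ℕ}

variable (n) in
def upperToeplitz (a : ℕ → R) : Matrix (Fin (n + 1)) (Fin (n + 1)) R :=
  of fun k l => if k ≤ l then a ((l : ℕ) - k) else 0

theorem det_upperToeplitz (a : ℕ → R) : (upperToeplitz n a).det = a 0 ^ (n + 1) := by
  rw [det_of_isUpperTriangular]
  · simp [upperToeplitz]
  · intro k l (hlk : l < k)
    simp [upperToeplitz, not_le.mpr hlk]

theorem Fin.sum_ite_le_eq_sum_range {M : Type*} [AddCommMonoid M] (f : ℕ → M) (l : Fin (n + 1)) :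
    ∑ k : Fin (n + 1), (if k ≤ l then f k else 0) = ∑ k ∈ range (l + 1), f k := by
  simp_rw [Fin.le_iff_val_le_val]
  rw [Fin.sum_univ_eq_sum_range (fun k => if k ≤ l then f k else 0), ← sum_filter]
  congr 1
  ext k
  simp only [mem_filter, mem_range]
  omega

theorem of_mul_upperToeplitz_apply {m : Type*} (F : m → ℕ → R) (a : ℕ → R) (i : m)
    (l : Fin (n + 1)) :
    ((of fun i (k : Fin (n + 1)) => F i k) * upperToeplitz n a) i l
      = ∑ k ∈ range (l + 1), F i k * a (l - k) := by
  simp only [mul_apply, of_apply, upperToeplitz, mul_ite, mul_zero]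
  exact Fin.sum_ite_le_eq_sum_range (fun k => F i k * a (l - k)) l

end upperToeplitz

section chooseRowsMatrix

variable {R : Type*} [CommRing R] [BinomialRing R]

def chooseRowsMatrix (n : ℕ) (b : R) (v : ℕ → R) :
    Matrix (Fin (n + 1)) (Fin (n + 1)) R :=
  of fun i k => if (i : ℕ) < n then Ring.choose (b + i) k else v k

theorem det_chooseRowsMatrix {n : ℕ} (b : R) (v : ℕ → R) :
    (chooseRowsMatrix n b v).det = ∑ k ∈ range (n + 1), v k * Ring.choose (-b) (n - k) := by
  set A := chooseRowsMatrix n b v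
  have hU : (upperToeplitz n (Ring.choose (-b))).det = 1 := by
    rw [det_upperToeplitz, Ring.choose_zero_right, one_pow]
  have hAU : ∀ i l, (A * upperToeplitz n (Ring.choose (-b))) i l = if (i : ℕ) < n
      then (Nat.choose i l : R) else ∑ k ∈ range (l + 1), v k * Ring.choose (-b) (l - k) := by
    intro i l
    dsimp only [A, chooseRowsMatrix]
    rw [of_mul_upperToeplitz_apply (fun (i : Fin (n + 1)) (k : ℕ) =>
      if (i : ℕ) < n then Ring.choose (b + i) k else v k)]
    split_ifs
    · rw [← Ring.choose_add_eq_sum_range, add_neg_cancel_comm, Ring.choose_natCast]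
    · rfl
  rw [← mul_one A.det, ← hU, ← det_mul, det_of_isLowerTriangular, Fin.prod_univ_castSucc]
  · simp [hAU]
  · intro i l (hil : i < l)
    rw [hAU, if_pos (by omega), Nat.choose_eq_zero_of_lt hil, Nat.cast_zero]

end chooseRowsMatrix

theorem matM_eq_of_chooseRowsMatrix {n α : ℕ} (β : ℕ) (hα : (α : ℚ) ≠ 0) :
    matM n α β = of fun i (j : Fin (n + 1)) => Ring.choose (-(α : ℚ)) j *
      (chooseRowsMatrix n (β : ℚ) fun k =>
        ((α : ℚ) + (n - k : ℕ)) / α * Ring.choose ((β : ℚ) + n + 1) k).submatrix id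
        Fin.revPerm i j := by
  ext i j
  have hj : (j : ℕ) ≤ n := Fin.is_le j
  have hrev : ((Fin.revPerm j : Fin (n + 1)) : ℕ) = n - j := by
    rw [Fin.revPerm_apply, Fin.val_rev]; omega
  simp only [matM, chooseRowsMatrix, genChoose_eq_choose, of_apply, submatrix_apply, id_eq, hrev,
    Nat.sub_sub_self hj]
  split_ifs
  · ring
  · have last_row := Ring.mul_choose_sub_one (-(α : ℚ)) j
    rw [show -(α : ℚ) - 1 = -1 - α by ring] at last_row
    field_simp
    linear_combination -last_row * Ring.choose ((β : ℚ) + n + 1) (n - j)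

theorem det_matM {n α : ℕ} (β : ℕ) (hα : (α : ℚ) ≠ 0) :
    (matM n α β).det = (∏ j : Fin (n + 1), Ring.choose (-(α : ℚ)) j)
      * Equiv.Perm.sign (Fin.revPerm : Equiv.Perm (Fin (n + 1))) * ((n + 1) * α - n * β) / α := by
  rw [matM_eq_of_chooseRowsMatrix β hα, det_mul_row, det_permute', det_chooseRowsMatrix,
    ← Ring.sum_add_sub_mul_choose_mul_choose_neg]
  simp only [div_mul_eq_mul_div, ← sum_div]
  ring

theorem detM_eq_zero_iff_general (n α β : ℕ) (hα : 1 ≤ α) :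
    (matM n α β).det = 0 ↔ n * β = (n + 1) * α := by
  have hα0 : (α : ℚ) ≠ 0 := by positivity
  rw [det_matM β hα0]
  simp only [div_eq_zero_iff, mul_eq_zero, prod_eq_zero_iff, Ring.choose_neg_natCast_ne_zero hα,
    hα0, Int.cast_eq_zero, Units.ne_zero, mem_univ, and_false, exists_false, false_or, or_false,
    sub_eq_zero, eq_comm (a := ((n : ℚ) + 1) * α)]
  norm_cast

/-- `det M = 0` iff `n·β = (n+1)·α`. -/
theorem detM_eq_zero_iff (n α β : ℕ) (hn : 1 ≤ n) (hα : 1 ≤ α) :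
    (matM n α β).det = 0 ↔ n * β = (n + 1) * α :=
  detM_eq_zero_iff_general n α β hα
end
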